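/- arXiv:1501.06254 — 2 statements merged into one kernel-verified Lean document; each statement's English description precedes it below -/
import Mathlib

section
/- Let μ > 0 and λ > 0. Then the neo-Hookean energy density satisfies W(G) ≥ 0 for every 2×2 real matrix G. -/
/-- Frobenius norm squared of a 2×2 real matrix. -/
noncomputable def frobSq (G : Matrix (Fin 2) (Fin 2) ℝ) : ℝ :=
  ∑ i, ∑ j, (G i j) ^ 2

/-- The neo-Hookean elastic energy density
`W(G) = (μ/2)(|G|² − 2) + (μ/2 + λ/2)(det G − 1)² − μ(det G − 1)`. -/
noncomputable def W (μ lam : ℝ) (G : Matrix (Fin 2) (Fin 2) ℝ) : ℝ :=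
  μ / 2 * (frobSq G - 2) + (μ / 2 + lam / 2) * (G.det - 1) ^ 2 - μ * (G.det - 1)


theorem stmt1 (μ lam : ℝ) (hμ : 0 < μ) (hlam : 0 < lam)
    (G : Matrix (Fin 2) (Fin 2) ℝ) : 0 ≤ W μ lam G := by
  have hdet : G.det = G 0 0 * G 1 1 - G 0 1 * G 1 0 := Matrix.det_fin_two G
  have hf : frobSq G = G 0 0 ^ 2 + G 0 1 ^ 2 + G 1 0 ^ 2 + G 1 1 ^ 2 := by
    simp [frobSq, Fin.sum_univ_two]; ring
  unfold W
  rw [hdet, hf]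
  nlinarith [sq_nonneg (G 0 0 - G 1 1), sq_nonneg (G 0 1 + G 1 0),
    sq_nonneg (G 0 0 * G 1 1 - G 0 1 * G 1 0 - 1), hμ.le, hlam.le,
    mul_nonneg hlam.le (sq_nonneg (G 0 0 * G 1 1 - G 0 1 * G 1 0 - 1)),
    mul_nonneg hμ.le (sq_nonneg (G 0 0 - G 1 1)),
    mul_nonneg hμ.le (sq_nonneg (G 0 1 + G 1 0)),
    mul_nonneg hμ.le (sq_nonneg (G 0 0 * G 1 1 - G 0 1 * G 1 0 - 1))]
end

section
/- Let μ > 0 and λ > 0, and let G be a 2×2 real matrix with W(G) = 0. Then G ∈ SO(2), i.e. GᵀG = I and det G = 1. -/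
open Matrix in
theorem stmt3 (μ lam : ℝ) (hμ : 0 < μ) (hlam : 0 < lam)
    (G : Matrix (Fin 2) (Fin 2) ℝ) (hW : W μ lam G = 0) :
    Gᵀ * G = 1 ∧ G.det = 1 := by
  set a := G 0 0 with ha
  set b := G 0 1 with hb
  set c := G 1 0 with hc
  set d := G 1 1 with hd
  have hdet : G.det = a * d - b * c := by rw [Matrix.det_fin_two]
  have hfrob : frobSq G = a ^ 2 + b ^ 2 + c ^ 2 + d ^ 2 := by
    simp [frobSq, Fin.sum_univ_two]; ring
  rw [W, hdet, hfrob] at hW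
  have key : μ / 2 * ((a - d) ^ 2 + (b + c) ^ 2)
      + (μ / 2 + lam / 2) * (a * d - b * c - 1) ^ 2 = 0 := by
    linear_combination hW
  have hs : (a - d) ^ 2 + (b + c) ^ 2 = 0 := by
    nlinarith [sq_nonneg (a - d), sq_nonneg (b + c), sq_nonneg (a * d - b * c - 1)]
  have hpair := (add_eq_zero_iff_of_nonneg (sq_nonneg (a - d)) (sq_nonneg (b + c))).mp hs
  have had : a = d := by
    have := pow_eq_zero_iff (n := 2) (by norm_num) |>.mp hpair.1
    linarith
  have hbc : c = -b := by
    have := pow_eq_zero_iff (n := 2) (by norm_num) |>.mp hpair.2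
    linarith
  have ht : a * d - b * c - 1 = 0 := by
    rw [hs] at key
    have h0 : (μ / 2 + lam / 2) * (a * d - b * c - 1) ^ 2 = 0 := by linarith
    have := (mul_eq_zero.mp h0).resolve_left (by positivity)
    have := pow_eq_zero_iff (n := 2) (by norm_num) |>.mp this
    linarith
  have hD : G.det = 1 := by rw [hdet]; linarith
  have h11 : a * a + b * b = 1 := by linear_combination ht + a * had + b * hbc
  have e00 : a * a + c * c = 1 := by linear_combination h11 + (c - b) * hbc
  have e01 : a * b + c * d = 0 := by linear_combination d * hbc + b * had
  have e11 : b * b + d * d = 1 := by linear_combination h11 - (a + d) * had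
  refine ⟨?_, hD⟩
  ext i j
  fin_cases i <;> fin_cases j <;>
    simp [Matrix.mul_apply, Matrix.transpose_apply, Fin.sum_univ_two,
      Matrix.one_apply, ← ha, ← hb, ← hc, ← hd] <;>
    linarith [e00, e01, e11]
end
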